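/- There exists a finite rotation-puzzle instance 𝒜 over the two-color tile set T_2 (the two-color WIRE subpuzzle, simulating a vertical wire) with a designated input boundary edge at its bottom and a designated output boundary edge at its top lying directly above the input edge, such that for each color c ∈ {blue, red} the instance 𝒜 has exactly one solution whose color at the input edge is c, and this solution has color c at the output edge. -/

import Mathlib

/-- The two Tantrix colors used in the two-color tile set. -/
inductive Color where
  | red
  | blue
deriving DecidableEq

/-- A tile is its clockwise color sequence: a word of length 6 over the colors,
edges indexed `0, …, 5` clockwise. -/
abbrev Tile := Fin 6 → Color

/-- Cyclic rotation of a tile by `k` steps: edge `i` of the rotated tile carries the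
color of edge `i + k` of the original sequence.  Two solutions are compared as the
assigned rotated color sequences, so orientations of a tile with identical color
sequences are identified. -/
def rotTile (k : Fin 6) (t : Tile) : Tile := fun i => t (i + k)

open Color in
/-- The two-color tile set `T₂`, consisting of the 8 color sequences
bbrrrr, rrbbbb, brrbrr, rbbrbb, rbrrrb, brbbbr, bbbbbb, rrrrrr. -/
def T2 : Set Tile :=
  { ![blue,blue,red,red,red,red],
    ![red,red,blue,blue,blue,blue],
    ![blue,red,red,blue,red,red],
    ![red,blue,blue,red,blue,blue],
    ![red,blue,red,red,red,blue],
    ![blue,red,blue,blue,blue,red],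
    ![blue,blue,blue,blue,blue,blue],
    ![red,red,red,red,red,red] }

/-- The six neighbor offsets of the hexagonal layout of `ℤ²`, listed clockwise
starting from straight up; edge `i` of a tile at `x` is the edge shared with the
neighboring point `x + dirs i`, and opposite directions differ by `3` (mod 6).
Two points are neighbors exactly if their difference is one of these offsets. -/
def dirs : Fin 6 → ℤ × ℤ := ![(0,1), (1,1), (1,0), (0,-1), (-1,-1), (-1,0)]

/-- A finite rotation-puzzle instance over the tile set `T2`:
a function from a finite set of points of `ℤ²` to `T2`. -/
structure Puzzle where
  tiles : ℤ × ℤ → Option Tile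
  finite : {x | tiles x ≠ none}.Finite
  memT2 : ∀ x t, tiles x = some t → t ∈ T2

/-- `sol` is a solution of the instance `P`: it assigns to each occupied point a
cyclic rotation of the tile placed there, such that for every pair of neighboring
occupied points the two assigned sequences give the same color to their joint edge
(edge `d` of the tile at `x` is glued to edge `d + 3` of the tile at `x + dirs d`). -/
def IsSolution (P : Puzzle) (sol : ℤ × ℤ → Option Tile) : Prop :=
  (∀ x, (P.tiles x = none → sol x = none) ∧
    (∀ t, P.tiles x = some t → ∃ k : Fin 6, sol x = some (rotTile k t))) ∧
  (∀ (x : ℤ × ℤ) (d : Fin 6) (s s' : Tile),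
    sol x = some s → sol (x + dirs d) = some s' → s d = s' (d + 3))

/-- `(x, d)` is a boundary edge of `P`: the point `x` is occupied and its
neighbor in direction `d` is not. -/
def IsBoundary (P : Puzzle) (x : ℤ × ℤ) (d : Fin 6) : Prop :=
  P.tiles x ≠ none ∧ P.tiles (x + dirs d) = none

/-- The solution `sol` has color `c` at the edge in direction `d` of the tile at `x`. -/
def SolColor (sol : ℤ × ℤ → Option Tile) (x : ℤ × ℤ) (d : Fin 6) (c : Color) : Prop :=
  ∃ s, sol x = some s ∧ s d = c

/-!
The wire is two copies of `brrbrr` stacked vertically, flanked by three monochromatic red tiles.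
Having period 3, `brrbrr` has only three orientations, one for each pair of opposite edges that
can carry its blue colour. The red neighbours force a red edge on each wire tile, which leaves two
orientations apiece; the colour at the input edge selects the orientation of the bottom tile, whose
top edge then shows the same colour and thereby selects the orientation of the top tile.
-/

theorem SolColor.apply_eq {sol : ℤ × ℤ → Option Tile} {x : ℤ × ℤ} {d : Fin 6} {c : Color}
    {s : Tile} (hc : SolColor sol x d c) (hs : sol x = some s) : s d = c := by
  obtain ⟨s', hs', rfl⟩ := hc
  rw [hs] at hs'
  cases hs'
  rfl

theorem rotTile_const (k : Fin 6) (c : Color) : rotTile k (fun _ => c) = fun _ => c := rfl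

namespace IsSolution

variable {P : Puzzle} {sol sol' : ℤ × ℤ → Option Tile}

theorem eq_none (h : IsSolution P sol) {x : ℤ × ℤ} (hx : P.tiles x = none) : sol x = none :=
  (h.1 x).1 hx

theorem exists_rotTile (h : IsSolution P sol) {x : ℤ × ℤ} {t : Tile}
    (hx : P.tiles x = some t) : ∃ k, sol x = some (rotTile k t) :=
  (h.1 x).2 t hx

theorem edge_eq (h : IsSolution P sol) {x : ℤ × ℤ} {d : Fin 6} {s s' : Tile}
    (hs : sol x = some s) (hs' : sol (x + dirs d) = some s') : s d = s' (d + 3) :=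
  h.2 x d s s' hs hs'

theorem eq_const (h : IsSolution P sol) {x : ℤ × ℤ} {c : Color}
    (hx : P.tiles x = some fun _ => c) : sol x = some fun _ => c := by
  obtain ⟨k, hk⟩ := h.exists_rotTile hx
  rwa [rotTile_const] at hk

theorem ext (h : IsSolution P sol) (h' : IsSolution P sol')
    (hocc : ∀ x t, P.tiles x = some t → sol x = sol' x) : sol = sol' := by
  funext x
  cases hx : P.tiles x with
  | none => rw [h.eq_none hx, h'.eq_none hx]
  | some t => exact hocc x t hx

end IsSolution

open Color

def wire : Tile := ![blue, red, red, blue, red, red]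

def allRed : Tile := fun _ => red

theorem wire_mem_T2 : wire ∈ T2 := by simp [T2, wire]

theorem allRed_mem_T2 : allRed ∈ T2 := by
  simp only [T2]
  decide

-- `wire` has period 3, so a rotation of it is determined by which opposite pair of edges is blue.
theorem rotTile_wire_eq_of_apply_eq {k k' i j : Fin 6} (hij : i ≠ j) (hij' : i ≠ j + 3)
    (hi : rotTile k wire i = rotTile k' wire i) (hj : rotTile k wire j = rotTile k' wire j) :
    rotTile k wire = rotTile k' wire := by
  revert k k' i j
  decide

def wireRedSites : Finset (ℤ × ℤ) := {(1, 1), (-1, -1), (-1, 1)}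

def wireSupport : Finset (ℤ × ℤ) := insert (0, 0) (insert (0, 1) wireRedSites)

/-- The red sites touch edges `1, 4` of the tile at `(0, 0)` and edges `2, 5` of the tile
at `(0, 1)`. -/
def wireLayout (bottom top : Tile) (x : ℤ × ℤ) : Option Tile :=
  if x = (0, 0) then some bottom
  else if x = (0, 1) then some top
  else if x ∈ wireRedSites then some allRed
  else none

theorem wireLayout_eq_none_iff {bottom top : Tile} {x : ℤ × ℤ} :
    wireLayout bottom top x = none ↔ x ∉ wireSupport := by
  unfold wireLayout wireSupport
  split_ifs <;> simp_all

theorem mem_wireSupport_of_wireLayout_eq_some {bottom top s : Tile} {x : ℤ × ℤ}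
    (hx : wireLayout bottom top x = some s) : x ∈ wireSupport :=
  by_contra fun hx' => by simp [wireLayout_eq_none_iff.2 hx'] at hx

def wirePuzzle : Puzzle where
  tiles := wireLayout wire wire
  finite := wireSupport.finite_toSet.subset fun _ hx => by
    simpa [wireLayout_eq_none_iff] using hx
  memT2 x t hx := by
    unfold wireLayout at hx
    split_ifs at hx <;> cases hx
    exacts [wire_mem_T2, wire_mem_T2, allRed_mem_T2]

theorem isSolution_wireLayout {kb kt : Fin 6} (hb1 : rotTile kb wire 1 = red)
    (hb4 : rotTile kb wire 4 = red) (ht2 : rotTile kt wire 2 = red)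
    (ht5 : rotTile kt wire 5 = red) (hbt : rotTile kb wire 0 = rotTile kt wire 3) :
    IsSolution wirePuzzle (wireLayout (rotTile kb wire) (rotTile kt wire)) := by
  refine ⟨fun x => ⟨fun hx => ?_, fun t hx => ?_⟩, fun x d s s' hs hs' => ?_⟩
  · exact wireLayout_eq_none_iff.2 (wireLayout_eq_none_iff.1 hx)
  · change wireLayout wire wire x = some t at hx
    unfold wireLayout at hx ⊢
    split_ifs at hx ⊢ <;> cases hx
    exacts [⟨kb, rfl⟩, ⟨kt, rfl⟩, ⟨0, rfl⟩]
  · have hx := mem_wireSupport_of_wireLayout_eq_some hs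
    simp only [wireSupport, wireRedSites, Finset.mem_insert, Finset.mem_singleton] at hx
    rcases hx with rfl | rfl | rfl | rfl | rfl <;> fin_cases d <;>
      simp [wireLayout, wireRedSites, dirs] at hs hs' <;> subst hs hs' <;>
      first | assumption | exact Eq.symm (by assumption)

namespace IsSolution

variable {sol sol' : ℤ × ℤ → Option Tile}

theorem eq_allRed (h : IsSolution wirePuzzle sol) {x : ℤ × ℤ} (hx : x ∈ wireRedSites) :
    sol x = some allRed := by
  refine h.eq_const ?_
  fin_cases hx <;> rfl

theorem exists_bottom (h : IsSolution wirePuzzle sol) :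
    ∃ k, sol (0, 0) = some (rotTile k wire) ∧ rotTile k wire 1 = red := by
  obtain ⟨k, hk⟩ := h.exists_rotTile (x := (0, 0)) rfl
  exact ⟨k, hk, h.edge_eq (d := 1) hk (h.eq_allRed (by decide))⟩

theorem exists_top (h : IsSolution wirePuzzle sol) :
    ∃ k, sol (0, 1) = some (rotTile k wire) ∧ rotTile k wire 2 = red := by
  obtain ⟨k, hk⟩ := h.exists_rotTile (x := (0, 1)) rfl
  exact ⟨k, hk, h.edge_eq (d := 2) hk (h.eq_allRed (by decide))⟩

theorem eq_of_solColor_input {c : Color} (h : IsSolution wirePuzzle sol)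
    (h' : IsSolution wirePuzzle sol') (hc : SolColor sol (0, 0) 3 c)
    (hc' : SolColor sol' (0, 0) 3 c) : sol = sol' := by
  obtain ⟨kb, hb, hb1⟩ := h.exists_bottom
  obtain ⟨kb', hb', hb1'⟩ := h'.exists_bottom
  have hbot : rotTile kb wire = rotTile kb' wire :=
    rotTile_wire_eq_of_apply_eq (i := 1) (j := 3) (by decide) (by decide)
      (hb1.trans hb1'.symm) ((hc.apply_eq hb).trans (hc'.apply_eq hb').symm)
  obtain ⟨kt, ht, ht2⟩ := h.exists_top
  obtain ⟨kt', ht', ht2'⟩ := h'.exists_top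
  have htop : rotTile kt wire = rotTile kt' wire :=
    rotTile_wire_eq_of_apply_eq (i := 2) (j := 3) (by decide) (by decide)
      (ht2.trans ht2'.symm)
      ((h.edge_eq (d := 0) hb ht).symm.trans (hbot ▸ h'.edge_eq (d := 0) hb' ht'))
  refine h.ext h' fun x t hx => ?_
  have hx := mem_wireSupport_of_wireLayout_eq_some hx
  rcases Finset.mem_insert.1 hx with rfl | hx
  · rw [hb, hb', hbot]
  rcases Finset.mem_insert.1 hx with rfl | hx
  · rw [ht, ht', htop]
  rw [h.eq_allRed hx, h'.eq_allRed hx]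

end IsSolution

/-- For red the blue edges of the bottom tile are turned to `2, 5`, those of the top tile
to `1, 4`. -/
theorem exists_isSolution_wirePuzzle (c : Color) :
    ∃ sol, IsSolution wirePuzzle sol ∧ SolColor sol (0, 0) 3 c ∧ SolColor sol (0, 1) 0 c := by
  cases c
  · exact ⟨_, isSolution_wireLayout (kb := 1) (kt := 2) rfl rfl rfl rfl rfl, ⟨_, rfl, rfl⟩,
      ⟨_, rfl, rfl⟩⟩
  · exact ⟨_, isSolution_wireLayout (kb := 0) (kt := 0) rfl rfl rfl rfl rfl, ⟨_, rfl, rfl⟩,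
      ⟨_, rfl, rfl⟩⟩

/-- the two-color WIRE subpuzzle: input boundary edge at the bottom, output boundary edge at the top directly above it; for each color `c ∈ {blue, red}` there is exactly one solution with color `c` at the input edge, and it has color `c` at the output edge. -/
theorem two_color_WIRE_subpuzzle :
    ∃ (P : Puzzle) (xIn xOut : ℤ × ℤ),
      IsBoundary P xIn 3 ∧ IsBoundary P xOut 0 ∧
      xOut.1 = xIn.1 ∧ xIn.2 < xOut.2 ∧
      ∀ c ∈ ({Color.blue, Color.red} : Set Color),
        ∃ sol : ℤ × ℤ → Option Tile,
          (IsSolution P sol ∧ SolColor sol xIn 3 c ∧ SolColor sol xOut 0 c) ∧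
          (∀ sol' : ℤ × ℤ → Option Tile,
            IsSolution P sol' → SolColor sol' xIn 3 c → sol' = sol) := by
  refine ⟨wirePuzzle, (0, 0), (0, 1), by unfold IsBoundary; decide,
    by unfold IsBoundary; decide, rfl, by decide, fun c _ => ?_⟩
  obtain ⟨sol, hsol, hin, hout⟩ := exists_isSolution_wirePuzzle c
  exact ⟨sol, ⟨hsol, hin, hout⟩, fun sol' h' hin' => h'.eq_of_solColor_input hsol hin' hin⟩
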